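/- A module (X, Y)_φ over the formal triangular matrix ring Γ = [[R, 0], [M, S]] is projective if and only if (i) the structure map φ : M ⊗_R X → Y is a monomorphism of S-modules, and (ii) X is a projective R-module and Coker(φ) is a projective S-module. -/

import Mathlib

open TensorProduct CategoryTheory

universe u
variable (R S M : Type) [CommRing R] [CommRing S]
  [AddCommGroup M] [Module R M] [Module S M] [SMulCommClass R S M]

/-- Modules over the triangular matrix ring Γ = [[R,0],[M,S]]: triples (X,Y,φ). -/
structure TriMod where
  X : Type
  Y : Type
  [addX : AddCommGroup X]
  [modX : Module R X]
  [addY : AddCommGroup Y]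
  [modY : Module S Y]
  phi : (M ⊗[R] X) →ₗ[S] Y

attribute [instance] TriMod.addX TriMod.modX TriMod.addY TriMod.modY

variable {R S M}

lemma lT_aux {X X' : Type} [AddCommGroup X] [Module R X] [AddCommGroup X'] [Module R X']
    (f : X →ₗ[R] X') (s : S) (t : M ⊗[R] X) :
    LinearMap.lTensor M f (s • t) = s • LinearMap.lTensor M f t := by
  induction t using TensorProduct.induction_on with
  | zero => simp
  | tmul m x => simp [TensorProduct.smul_tmul']
  | add a b ha hb => simp only [smul_add, map_add, ha, hb]

/-- `M ⊗ f` as an `S`-linear map. -/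
noncomputable def lT {X X' : Type} [AddCommGroup X] [Module R X] [AddCommGroup X'] [Module R X']
    (f : X →ₗ[R] X') : (M ⊗[R] X) →ₗ[S] (M ⊗[R] X') where
  toFun := LinearMap.lTensor M f
  map_add' := map_add _
  map_smul' s t := lT_aux f s t

@[simp] lemma lT_id {X : Type} [AddCommGroup X] [Module R X] :
    (lT (LinearMap.id : X →ₗ[R] X) : (M ⊗[R] X) →ₗ[S] (M ⊗[R] X)) = LinearMap.id := by
  apply LinearMap.ext; intro t
  simp [lT]

lemma lT_comp {X X' X'' : Type} [AddCommGroup X] [Module R X] [AddCommGroup X'] [Module R X']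
    [AddCommGroup X''] [Module R X''] (f : X →ₗ[R] X') (g : X' →ₗ[R] X'') :
    (lT (g ∘ₗ f) : (M ⊗[R] X) →ₗ[S] _) = (lT g) ∘ₗ (lT f) := by
  apply LinearMap.ext; intro t
  simp [lT, LinearMap.lTensor_comp]

@[simp] lemma lT_zero {X X' : Type} [AddCommGroup X] [Module R X] [AddCommGroup X'] [Module R X'] :
    (lT (0 : X →ₗ[R] X') : (M ⊗[R] X) →ₗ[S] (M ⊗[R] X')) = 0 := by
  apply LinearMap.ext; intro t
  simp [lT]

variable (R S M) in
@[ext] structure TriModHom (A B : TriMod R S M) where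
  f : A.X →ₗ[R] B.X
  g : A.Y →ₗ[S] B.Y
  comm : g ∘ₗ A.phi = B.phi ∘ₗ lT f

instance : Category (TriMod R S M) where
  Hom A B := TriModHom R S M A B
  id A := ⟨LinearMap.id, LinearMap.id, by simp⟩
  comp {A B C} u v := ⟨v.f ∘ₗ u.f, v.g ∘ₗ u.g, by
    rw [LinearMap.comp_assoc, u.comm, ← LinearMap.comp_assoc, v.comm, lT_comp,
      LinearMap.comp_assoc]⟩
  id_comp u := by apply TriModHom.ext <;> simp
  comp_id u := by apply TriModHom.ext <;> simp
  assoc u v w := by apply TriModHom.ext <;> simp [LinearMap.comp_assoc]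

instance instZeroHom (A B : TriMod R S M) : Zero (A ⟶ B) := ⟨⟨0, 0, by simp⟩⟩

@[simp] lemma zero_f (A B : TriMod R S M) : (0 : A ⟶ B).f = 0 := rfl
@[simp] lemma zero_g (A B : TriMod R S M) : (0 : A ⟶ B).g = 0 := rfl
@[simp] lemma comp_f {A B C : TriMod R S M} (u : A ⟶ B) (v : B ⟶ C) :
    (u ≫ v).f = v.f ∘ₗ u.f := rfl
@[simp] lemma comp_g {A B C : TriMod R S M} (u : A ⟶ B) (v : B ⟶ C) :
    (u ≫ v).g = v.g ∘ₗ u.g := rfl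
@[simp] lemma id_f (A : TriMod R S M) : TriModHom.f (𝟙 A) = LinearMap.id := rfl
@[simp] lemma id_g (A : TriMod R S M) : TriModHom.g (𝟙 A) = LinearMap.id := rfl

instance : Limits.HasZeroMorphisms (TriMod R S M) where
  comp_zero u C := by apply TriModHom.ext <;> simp
  zero_comp A {B C} u := by apply TriModHom.ext <;> simp
section Generic
open CategoryTheory Limits
variable {C : Type u} [Category.{v} C] [Limits.HasZeroMorphisms C]

/-- A complex of projectives is totally acyclic if it is acyclic and stays acyclic
under `Hom(-, P)` for every projective `P`. -/
def IsTotallyAcyclic (E : ChainComplex C ℤ) : Prop :=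
  (∀ i, Projective (E.X i)) ∧ (∀ i, E.ExactAt i) ∧
  ∀ (P : C), Projective P → ∀ (i : ℤ) (g : E.X i ⟶ P), E.d (i + 1) i ≫ g = 0 →
    ∃ h : E.X (i - 1) ⟶ P, E.d i (i - 1) ≫ h = g

/-- A complex of injectives is totally acyclic if it is acyclic and stays acyclic
under `Hom(I, -)` for every injective `I`. -/
def IsInjTotallyAcyclic (E : ChainComplex C ℤ) : Prop :=
  (∀ i, Injective (E.X i)) ∧ (∀ i, E.ExactAt i) ∧
  ∀ (I : C), Injective I → ∀ (i : ℤ) (g : I ⟶ E.X i), g ≫ E.d i (i - 1) = 0 →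
    ∃ h : I ⟶ E.X (i + 1), h ≫ E.d (i + 1) i = g

/-- An object is Gorenstein projective if it is a syzygy (a kernel of a differential)
of a totally acyclic complex of projectives. -/
def IsGorensteinProjective (G : C) : Prop :=
  ∃ (E : ChainComplex C ℤ), IsTotallyAcyclic E ∧
    ∃ (ι : G ⟶ E.X 0) (w : ι ≫ E.d 0 (-1) = 0),
      Nonempty (IsLimit (KernelFork.ofι ι w))

/-- An object is Gorenstein injective if it is a cosyzygy (a cokernel of a differential)
of a totally acyclic complex of injectives. -/
def IsGorensteinInjective (G : C) : Prop :=
  ∃ (E : ChainComplex C ℤ), IsInjTotallyAcyclic E ∧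
    ∃ (π : E.X 0 ⟶ G) (w : E.d 1 0 ≫ π = 0),
      Nonempty (IsColimit (CokernelCofork.ofπ π w))

end Generic

/-- `Ext¹_A(P, N) = 0`, phrased as: every extension of `P` by `N` splits. -/
def Ext1Vanishes (A : Type) [Ring A] (P N : Type) [AddCommGroup P] [Module A P]
    [AddCommGroup N] [Module A N] : Prop :=
  ∀ (D : Type) [AddCommGroup D] [Module A D] (i : N →ₗ[A] D) (p : D →ₗ[A] P),
    Function.Injective i → Function.Surjective p → Function.Exact i p →
    ∃ s : P →ₗ[A] D, p ∘ₗ s = LinearMap.id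

/-- A module is Gorenstein projective. -/
def ModGorensteinProjective (A : Type) [Ring A] (N : Type) [AddCommGroup N] [Module A N] :
    Prop := IsGorensteinProjective (ModuleCat.of A N)

/-- A module is Gorenstein injective. -/
def ModGorensteinInjective (A : Type) [Ring A] (N : Type) [AddCommGroup N] [Module A N] :
    Prop := IsGorensteinInjective (ModuleCat.of A N)
section Constructions
open CategoryTheory Limits
variable {R S M : Type} [CommRing R] [CommRing S]
  [AddCommGroup M] [Module R M] [Module S M] [SMulCommClass R S M]

variable (R S M) in
/-- The Γ-module `e¹_λ(X) = (X, M ⊗ X)_1`. -/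
noncomputable def e1obj (X : Type) [AddCommGroup X] [Module R X] : TriMod R S M :=
  ⟨X, M ⊗[R] X, LinearMap.id⟩

variable (R S M) in
/-- The Γ-module `e²_λ(Y) = (0, Y)_0`. -/
noncomputable def e2obj (Y : Type) [AddCommGroup Y] [Module S Y] : TriMod R S M :=
  ⟨PUnit, Y, 0⟩

variable (S M) in
/-- The complex `M ⊗[R] E` of `S`-modules obtained from a complex `E` of `R`-modules. -/
noncomputable def tensorComplex (E : ChainComplex (ModuleCat R) ℤ) :
    ChainComplex (ModuleCat S) ℤ where
  X i := ModuleCat.of S (M ⊗[R] E.X i)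
  d i j := ModuleCat.ofHom (lT (E.d i j).hom)
  shape i j h := by
    have h0 : E.d i j = 0 := E.shape i j h
    apply ModuleCat.hom_ext
    rw [ModuleCat.hom_ofHom, h0, ModuleCat.hom_zero, lT_zero, ModuleCat.hom_zero]
  d_comp_d' i j k _ _ := by
    have h0 : E.d i j ≫ E.d j k = 0 := E.d_comp_d i j k
    apply ModuleCat.hom_ext
    rw [ModuleCat.hom_comp, ModuleCat.hom_ofHom, ModuleCat.hom_ofHom, ← lT_comp,
      ← ModuleCat.hom_comp, h0, ModuleCat.hom_zero, lT_zero, ModuleCat.hom_zero]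

variable (R S M) in
/-- Condition (1): `M ⊗[R] -` takes acyclic complexes of projective `R`-modules to
acyclic complexes of `S`-modules. -/
def Cond1 : Prop :=
  ∀ (E : ChainComplex (ModuleCat R) ℤ),
    (∀ i, Module.Projective R (E.X i)) → (∀ i, E.ExactAt i) →
    ∀ i, (tensorComplex S M E).ExactAt i

variable (S M) in
/-- `N` lies in `Add(M)`: it is a direct summand of a direct sum of copies of `M`. -/
def MemAdd (N : Type) [AddCommGroup N] [Module S N] : Prop :=
  ∃ (I : Type) (ι : N →ₗ[S] (I →₀ M)) (p : (I →₀ M) →ₗ[S] N), p ∘ₗ ι = LinearMap.id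

variable (R S M) in
/-- Condition (2): `Add(M) ⊆ GProj(S)ᗮ`. -/
def Cond2 : Prop :=
  ∀ (N : Type) [AddCommGroup N] [Module S N], MemAdd S M N →
    ∀ (G : Type) [AddCommGroup G] [Module S G],
      ModGorensteinProjective S G → Ext1Vanishes S G N

end Constructions
section MoreConstructions
open CategoryTheory Limits
variable {R S M : Type} [CommRing R] [CommRing S]
  [AddCommGroup M] [Module R M] [Module S M] [SMulCommClass R S M]

variable (R S M) in
/-- Termwise application of `e¹_λ` to a complex of `R`-modules. -/
noncomputable def e1c (E : ChainComplex (ModuleCat R) ℤ) : ChainComplex (TriMod R S M) ℤ where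
  X i := e1obj R S M (E.X i)
  d i j := ⟨(E.d i j).hom, lT (E.d i j).hom, by
    show lT (E.d i j).hom ∘ₗ LinearMap.id = LinearMap.id ∘ₗ _
    (try simp) <;> rfl⟩
  shape i j h := by
    have h0 : (E.d i j).hom = 0 := by rw [E.shape i j h, ModuleCat.hom_zero]
    apply TriModHom.ext <;> (try simp [h0]) <;> rfl
  d_comp_d' i j k _ _ := by
    have h0 : ((E.d j k).hom ∘ₗ (E.d i j).hom) = 0 := by
      rw [← ModuleCat.hom_comp, E.d_comp_d i j k, ModuleCat.hom_zero]
    apply TriModHom.ext <;> dsimp only [comp_f, comp_g]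
    · exact h0
    · show lT (E.d j k).hom ∘ₗ lT (E.d i j).hom = _
      rw [← lT_comp, h0, lT_zero]; rfl

variable (R S M) in
/-- Termwise application of `e²_λ` to a complex of `S`-modules. -/
noncomputable def e2c (E : ChainComplex (ModuleCat S) ℤ) : ChainComplex (TriMod R S M) ℤ where
  X i := e2obj R S M (E.X i)
  d i j := ⟨0, (E.d i j).hom, by
    show (E.d i j).hom ∘ₗ (0 : (M ⊗[R] PUnit) →ₗ[S] _) = _
    (try simp) <;> rfl⟩
  shape i j h := by
    have h0 : (E.d i j).hom = 0 := by rw [E.shape i j h, ModuleCat.hom_zero]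
    apply TriModHom.ext <;> (try simp [h0]) <;> rfl
  d_comp_d' i j k _ _ := by
    have h0 : ((E.d j k).hom ∘ₗ (E.d i j).hom) = 0 := by
      rw [← ModuleCat.hom_comp, E.d_comp_d i j k, ModuleCat.hom_zero]
    apply TriModHom.ext <;> dsimp only [comp_f, comp_g]
    · simp
    · exact h0

variable (R S M) in
/-- The complex of first components of a complex of Γ-modules. -/
noncomputable def compA (E : ChainComplex (TriMod R S M) ℤ) : ChainComplex (ModuleCat R) ℤ where
  X i := ModuleCat.of R (E.X i).X
  d i j := ModuleCat.ofHom (E.d i j).f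
  shape i j h := by
    apply ModuleCat.hom_ext
    rw [ModuleCat.hom_ofHom, E.shape i j h, zero_f, ModuleCat.hom_zero]
  d_comp_d' i j k _ _ := by
    have h0 := congrArg TriModHom.f (E.d_comp_d i j k)
    simp only [comp_f, zero_f] at h0
    apply ModuleCat.hom_ext
    rw [ModuleCat.hom_comp, ModuleCat.hom_ofHom, ModuleCat.hom_ofHom, h0, ModuleCat.hom_zero]

lemma range_le_comap {A B : TriMod R S M} (u : A ⟶ B) :
    LinearMap.range A.phi ≤ (LinearMap.range B.phi).comap u.g := by
  rintro y ⟨t, rfl⟩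
  exact ⟨lT u.f t, (LinearMap.congr_fun u.comm t).symm⟩

variable (R S M) in
/-- The complex `Coker E` of the cokernels of the structure maps of a complex of
Γ-modules. -/
noncomputable def cokerC (E : ChainComplex (TriMod R S M) ℤ) : ChainComplex (ModuleCat S) ℤ where
  X i := ModuleCat.of S ((E.X i).Y ⧸ LinearMap.range (E.X i).phi)
  d i j := ModuleCat.ofHom (Submodule.mapQ _ _ (E.d i j).g (range_le_comap (E.d i j)))
  shape i j h := by
    apply ModuleCat.hom_ext
    apply LinearMap.ext; intro x
    obtain ⟨y, rfl⟩ := Submodule.Quotient.mk_surjective _ x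
    rw [ModuleCat.hom_ofHom, Submodule.mapQ_apply, E.shape i j h]
    first | rfl | simp
  d_comp_d' i j k _ _ := by
    apply ModuleCat.hom_ext
    apply LinearMap.ext; intro x
    obtain ⟨y, rfl⟩ := Submodule.Quotient.mk_surjective _ x
    have h0 := congrArg TriModHom.g (E.d_comp_d i j k)
    simp only [comp_g, zero_g] at h0
    show Submodule.Quotient.mk ((E.d j k).g ((E.d i j).g y)) = 0
    rw [← LinearMap.comp_apply, h0]
    rfl

end MoreConstructions
section HomModule
open CategoryTheory Limits
variable {R S M : Type} [CommRing R] [CommRing S]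
  [AddCommGroup M] [Module R M] [Module S M] [SMulCommClass R S M]

variable (S M) in
/-- Scalar multiplication by `r : R` on `M`, as an `S`-linear map. -/
def rsmulM (r : R) : M →ₗ[S] M where
  toFun m := r • m
  map_add' := smul_add r
  map_smul' s m := (smul_comm r s m)

/-- The right `R`-module structure on `Hom_S(M, Y)` coming from the `R`-action on `M`. -/
instance homRModule (Y : Type) [AddCommGroup Y] [Module S Y] : Module R (M →ₗ[S] Y) where
  smul r f := f ∘ₗ rsmulM S M r
  one_smul f := by
    apply LinearMap.ext; intro m
    show f ((1 : R) • m) = f m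
    rw [one_smul]
  mul_smul r r' f := by
    apply LinearMap.ext; intro m
    show f ((r * r') • m) = f (r' • r • m)
    rw [mul_comm, mul_smul]
  smul_zero r := by apply LinearMap.ext; intro m; rfl
  smul_add r f g := by apply LinearMap.ext; intro m; rfl
  add_smul r r' f := by
    apply LinearMap.ext; intro m
    show f ((r + r') • m) = f (r • m) + f (r' • m)
    rw [add_smul, map_add]
  zero_smul f := by
    apply LinearMap.ext; intro m
    show f ((0 : R) • m) = 0
    rw [zero_smul, map_zero]

@[simp] lemma homRModule_smul_apply {Y : Type} [AddCommGroup Y] [Module S Y]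
    (r : R) (f : M →ₗ[S] Y) (m : M) : (r • f) m = f (r • m) := rfl

/-- Postcomposition `Hom_S(M, g)`, as an `R`-linear map. -/
def hT {Y Y' : Type} [AddCommGroup Y] [Module S Y] [AddCommGroup Y'] [Module S Y']
    (g : Y →ₗ[S] Y') : (M →ₗ[S] Y) →ₗ[R] (M →ₗ[S] Y') where
  toFun f := g ∘ₗ f
  map_add' f f' := by apply LinearMap.ext; intro m; simp
  map_smul' r f := rfl

@[simp] lemma hT_zero {Y Y' : Type} [AddCommGroup Y] [Module S Y] [AddCommGroup Y']
    [Module S Y'] : hT (R := R) (M := M) (0 : Y →ₗ[S] Y') = 0 := by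
  apply LinearMap.ext; intro f; apply LinearMap.ext; intro m; rfl

lemma hT_comp {Y Y' Y'' : Type} [AddCommGroup Y] [Module S Y] [AddCommGroup Y']
    [Module S Y'] [AddCommGroup Y''] [Module S Y''] (g : Y →ₗ[S] Y') (g' : Y' →ₗ[S] Y'') :
    hT (R := R) (M := M) (g' ∘ₗ g) = (hT g') ∘ₗ (hT g) := by
  apply LinearMap.ext; intro f; apply LinearMap.ext; intro m; rfl

variable (R M) in
/-- The complex `Hom_S(M, E)` of `R`-modules obtained from a complex `E` of `S`-modules. -/
noncomputable def homComplex (E : ChainComplex (ModuleCat S) ℤ) :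
    ChainComplex (ModuleCat R) ℤ where
  X i := ModuleCat.of R (M →ₗ[S] E.X i)
  d i j := ModuleCat.ofHom (hT (E.d i j).hom : _ →ₗ[R] _)
  shape i j h := by
    have h0 : (E.d i j).hom = 0 := by rw [E.shape i j h, ModuleCat.hom_zero]
    apply ModuleCat.hom_ext
    rw [ModuleCat.hom_ofHom, h0, hT_zero, ModuleCat.hom_zero]
  d_comp_d' i j k _ _ := by
    have h0 : ((E.d j k).hom ∘ₗ (E.d i j).hom) = 0 := by
      rw [← ModuleCat.hom_comp, E.d_comp_d i j k, ModuleCat.hom_zero]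
    apply ModuleCat.hom_ext
    rw [ModuleCat.hom_comp, ModuleCat.hom_ofHom, ModuleCat.hom_ofHom, ← hT_comp, h0, hT_zero,
      ModuleCat.hom_zero]

variable (R S M) in
/-- Condition (3): `Hom_S(M, -)` takes acyclic complexes of injective `S`-modules to
acyclic complexes of `R`-modules. -/
def Cond3 : Prop :=
  ∀ (E : ChainComplex (ModuleCat S) ℤ),
    (∀ i, Module.Injective S (E.X i)) → (∀ i, E.ExactAt i) →
    ∀ i, (homComplex R M E).ExactAt i

variable (R S M) in
/-- Condition (4): `Hom_S(M, I) ∈ ᗮGInj(R)` for every injective `S`-module `I`. -/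
def Cond4 : Prop :=
  ∀ (I : Type) [AddCommGroup I] [Module S I], Module.Injective S I →
    ∀ (G : Type) [AddCommGroup G] [Module R G],
      ModGorensteinInjective R G → Ext1Vanishes R (M →ₗ[S] I) G

variable (S M) in
/-- The evaluation map `M ⊗_R Hom_S(M, Y) → Y` as an additive map. -/
noncomputable def evMapAdd (Y : Type) [AddCommGroup Y] [Module S Y] :
    (M ⊗[R] (M →ₗ[S] Y)) →+ Y :=
  TensorProduct.liftAddHom
    (AddMonoidHom.mk' (fun m => AddMonoidHom.mk' (fun f : M →ₗ[S] Y => f m)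
      (fun f g => rfl)) (fun m m' => by
        apply AddMonoidHom.ext; intro f; exact f.map_add m m'))
    (fun r m f => by show f (r • m) = (r • f) m; rfl)

lemma evMapAdd_smul {Y : Type} [AddCommGroup Y] [Module S Y] (s : S)
    (t : M ⊗[R] (M →ₗ[S] Y)) : evMapAdd S M Y (s • t) = s • evMapAdd S M Y t := by
  induction t using TensorProduct.induction_on with
  | zero => simp
  | tmul m f =>
    rw [TensorProduct.smul_tmul']
    show (f : M →ₗ[S] Y) (s • m) = s • f m
    exact f.map_smul s m
  | add a b ha hb => simp only [map_add, smul_add, ha, hb]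

variable (S M) in
/-- The evaluation map `M ⊗_R Hom_S(M, Y) → Y`. -/
noncomputable def evMap (Y : Type) [AddCommGroup Y] [Module S Y] :
    (M ⊗[R] (M →ₗ[S] Y)) →ₗ[S] Y where
  toFun := evMapAdd S M Y
  map_add' := map_add _
  map_smul' := evMapAdd_smul

variable (R S M) in
/-- The Γ-module `e²_ρ(Y) = (Hom_S(M,Y), Y)_1`. -/
noncomputable def e2rhoObj (Y : Type) [AddCommGroup Y] [Module S Y] : TriMod R S M :=
  ⟨M →ₗ[S] Y, Y, evMap S M Y⟩

end HomModule
section Functors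
open CategoryTheory Limits
variable (R S M : Type) [CommRing R] [CommRing S]
  [AddCommGroup M] [Module R M] [Module S M] [SMulCommClass R S M]

/-- The evaluation functor `e¹ : Mod Γ → Mod R`, `(X,Y)_φ ↦ X`. -/
noncomputable def ev1 : TriMod R S M ⥤ ModuleCat R where
  obj A := ModuleCat.of R A.X
  map u := ModuleCat.ofHom u.f
  map_id A := rfl
  map_comp u v := rfl

/-- The functor `e¹_λ : Mod R → Mod Γ`, `X ↦ (X, M ⊗ X)_1`. -/
noncomputable def e1fun : ModuleCat R ⥤ TriMod R S M where
  obj X := e1obj R S M X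
  map {X X'} f := ⟨f.hom, lT f.hom, by
    show lT (M := M) (S := S) f.hom ∘ₗ LinearMap.id = LinearMap.id ∘ₗ _
    (try simp) <;> rfl⟩
  map_id X := by
    apply TriModHom.ext
    · rfl
    · exact lT_id
  map_comp {X X' X''} f g := by
    apply TriModHom.ext <;> dsimp only [comp_f, comp_g]
    · rfl
    · show lT (M := M) (S := S) (g.hom ∘ₗ f.hom) = _
      exact lT_comp _ _

/-- The evaluation functor `e² : Mod Γ → Mod S`, `(X,Y)_φ ↦ Y`. -/
noncomputable def ev2 : TriMod R S M ⥤ ModuleCat S where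
  obj A := ModuleCat.of S A.Y
  map u := ModuleCat.ofHom u.g
  map_id A := rfl
  map_comp u v := rfl

/-- The functor `e²_λ : Mod S → Mod Γ`, `Y ↦ (0, Y)_0`. -/
noncomputable def e2fun : ModuleCat S ⥤ TriMod R S M where
  obj Y := e2obj R S M Y
  map {Y Y'} g := ⟨LinearMap.id, g.hom, by
    show g.hom ∘ₗ (0 : (M ⊗[R] PUnit) →ₗ[S] Y) = _
    (try simp [e2obj]) <;> first | rfl | exact (LinearMap.zero_comp _).symm⟩
  map_id Y := by apply TriModHom.ext <;> rfl
  map_comp f g := by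
    apply TriModHom.ext
    · show LinearMap.id ∘ₗ LinearMap.id = (LinearMap.id : PUnit →ₗ[R] PUnit)
      simp
    · rfl

/-- The functor `e²_ρ : Mod S → Mod Γ`, `Y ↦ (Hom_S(M,Y), Y)_1`. -/
noncomputable def e2rhoFun : ModuleCat S ⥤ TriMod R S M where
  obj Y := e2rhoObj R S M Y
  map {Y Y'} g := ⟨hT g.hom, g.hom, by
    apply LinearMap.ext; intro t
    induction t using TensorProduct.induction_on with
    | zero => simp
    | tmul m f => rfl
    | add a b ha hb => simp only [map_add, ha, hb]⟩
  map_id Y := by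
    apply TriModHom.ext <;> dsimp only [id_f, id_g]
    · apply LinearMap.ext; intro f; apply LinearMap.ext; intro m; rfl
    · rfl
  map_comp f g := by
    apply TriModHom.ext <;> dsimp only [comp_f, comp_g]
    · apply LinearMap.ext; intro u; apply LinearMap.ext; intro m; rfl
    · rfl

end Functors

section Props
open CategoryTheory Limits
variable {R S M : Type} [CommRing R] [CommRing S]
  [AddCommGroup M] [Module R M] [Module S M] [SMulCommClass R S M]

/-- `Ext¹_Γ(P, A) = 0`: every extension `0 → A → D → P → 0` of Γ-modules splits. -/
def TriExt1Vanishes (P A : TriMod R S M) : Prop :=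
  ∀ (D : TriMod R S M) (i : A ⟶ D) (p : D ⟶ P) (w : i ≫ p = 0), Epi p →
    Nonempty (IsLimit (KernelFork.ofι i w)) → ∃ s : P ⟶ D, s ≫ p = 𝟙 P

/-- `A ∈ GProj(Γ)ᗮ`. -/
def TriMemGProjPerp (A : TriMod R S M) : Prop :=
  ∀ G : TriMod R S M, IsGorensteinProjective G → TriExt1Vanishes G A

/-- `A ∈ ᗮGInj(Γ)`. -/
def TriMemPerpGInj (A : TriMod R S M) : Prop :=
  ∀ G : TriMod R S M, IsGorensteinInjective G → TriExt1Vanishes A G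

variable (R S M) in
/-- `Γ` is virtually Gorenstein: `GProj(Γ)ᗮ = ᗮGInj(Γ)`. -/
def TriVirtuallyGorenstein : Prop :=
  ∀ A : TriMod R S M, TriMemGProjPerp A ↔ TriMemPerpGInj A

/-- A ring `A` is virtually Gorenstein: `GProj(A)ᗮ = ᗮGInj(A)`. -/
def RingVirtuallyGorenstein (A : Type) [Ring A] : Prop :=
  ∀ (N : Type) [AddCommGroup N] [Module A N],
    (∀ (G : Type) [AddCommGroup G] [Module A G],
        ModGorensteinProjective A G → Ext1Vanishes A G N) ↔
    (∀ (G : Type) [AddCommGroup G] [Module A G],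
        ModGorensteinInjective A G → Ext1Vanishes A N G)

/-- An object of a category with zero morphisms is indecomposable: it is nonzero and its
only idempotent endomorphisms are `0` and the identity. -/
def Indec {C : Type u} [Category.{v} C] [Limits.HasZeroMorphisms C] (A : C) : Prop :=
  ¬ IsZero A ∧ ∀ e : A ⟶ A, e ≫ e = e → e = 0 ∨ e = 𝟙 A

/-- A Γ-module is finitely generated iff both components are. -/
def TriFG (A : TriMod R S M) : Prop := Module.Finite R A.X ∧ Module.Finite S A.Y

variable (R S M) in
/-- `Γ` is of finite Cohen-Macaulay type. -/
def TriCMFinite : Prop :=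
  ∃ (n : ℕ) (rep : Fin n → TriMod R S M),
    ∀ A : TriMod R S M, TriFG A → Indec A → IsGorensteinProjective A →
      ∃ i : Fin n, Nonempty (A ≅ rep i)

variable (R S M) in
/-- `Γ` is Cohen-Macaulay free. -/
def TriCMFree : Prop :=
  ∀ A : TriMod R S M, TriFG A → IsGorensteinProjective A → Projective A

/-- A ring is of finite Cohen-Macaulay type: up to isomorphism, only finitely many
indecomposable finitely generated Gorenstein projective modules. -/
def RingCMFinite (A : Type) [Ring A] : Prop :=
  ∃ (n : ℕ) (rep : Fin n → ModuleCat.{0} A),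
    ∀ N : ModuleCat.{0} A, Module.Finite A N → Indec N → IsGorensteinProjective N →
      ∃ i : Fin n, Nonempty (N ≅ rep i)

/-- A ring is Cohen-Macaulay free: every finitely generated Gorenstein projective module
is projective. -/
def RingCMFree (A : Type) [Ring A] : Prop :=
  ∀ (N : Type) [AddCommGroup N] [Module A N],
    Module.Finite A N → ModGorensteinProjective A N → Module.Projective A N

end Props

section Statement
open CategoryTheory Limits
variable {R S M : Type} [CommRing R] [CommRing S]
  [AddCommGroup M] [Module R M] [Module S M] [SMulCommClass R S M]

/-! A projective Γ-module is a retract of the free cover `(F, (M ⊗ F) × G)`, `F` and `G` free,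
whose structure map is the first inclusion; injectivity of the structure map, projectivity of
the first component and projectivity of the cokernel all pass to retracts. Conversely, the
conditions split `0 → M ⊗ X → Y → Coker φ → 0`, so `Y ≅ (M ⊗ X) × Coker φ` with `φ` the first
inclusion, and a lift through an epimorphism is assembled from lifts of `X` and of `Coker φ`. -/

namespace TriMod

variable {A B : TriMod R S M}

lemma surjective_f_of_epi (u : A ⟶ B) [Epi u] : Function.Surjective u.f := by
  let Q : TriMod R S M := ⟨B.X ⧸ LinearMap.range u.f, PUnit, 0⟩
  let v : B ⟶ Q := ⟨(LinearMap.range u.f).mkQ, 0, Subsingleton.elim _ _⟩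
  have hv : v = 0 :=
    zero_of_epi_comp u (TriModHom.ext (LinearMap.range_mkQ_comp u.f) (Subsingleton.elim _ _))
  exact fun b =>
    (Submodule.Quotient.mk_eq_zero _).mp (LinearMap.congr_fun (congrArg TriModHom.f hv) b)

lemma surjective_g_of_epi (u : A ⟶ B) [Epi u] : Function.Surjective u.g := by
  have hφ : LinearMap.range B.phi ≤ LinearMap.range u.g := by
    rintro _ ⟨t, rfl⟩
    obtain ⟨t', rfl⟩ := LinearMap.lTensor_surjective M (surjective_f_of_epi u) t
    exact ⟨A.phi t', LinearMap.congr_fun u.comm t'⟩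
  let Q : TriMod R S M := ⟨PUnit, B.Y ⧸ LinearMap.range u.g, 0⟩
  let v : B ⟶ Q := ⟨0, (LinearMap.range u.g).mkQ, by
    ext t
    exact (Submodule.Quotient.mk_eq_zero _).mpr (hφ ⟨t, rfl⟩)⟩
  have hv : v = 0 :=
    zero_of_epi_comp u (TriModHom.ext (Subsingleton.elim _ _) (LinearMap.range_mkQ_comp u.g))
  exact fun b =>
    (Submodule.Quotient.mk_eq_zero _).mp (LinearMap.congr_fun (congrArg TriModHom.g hv) b)

lemma epi_of_surjective (u : A ⟶ B) (hf : Function.Surjective u.f)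
    (hg : Function.Surjective u.g) : Epi u where
  left_cancellation _ _ h := TriModHom.ext
    ((LinearMap.cancel_right hf).mp (congrArg TriModHom.f h))
    ((LinearMap.cancel_right hg).mp (congrArg TriModHom.g h))

lemma retract_f (h : Retract A B) : h.r.f ∘ₗ h.i.f = LinearMap.id :=
  congrArg TriModHom.f h.retract

lemma retract_g (h : Retract A B) : h.r.g ∘ₗ h.i.g = LinearMap.id :=
  congrArg TriModHom.g h.retract

lemma injective_phi_of_retract (h : Retract A B) (hB : Function.Injective B.phi) :
    Function.Injective A.phi := by
  have hi : Function.Injective (lT (S := S) (M := M) h.i.f) :=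
    Function.LeftInverse.injective (g := lT h.r.f) fun t => by
      rw [← LinearMap.comp_apply, ← lT_comp, retract_f, lT_id, LinearMap.id_apply]
  have hcomp : Function.Injective (h.i.g ∘ₗ A.phi) := by
    rw [h.i.comm, LinearMap.coe_comp]
    exact hB.comp hi
  exact Function.Injective.of_comp hcomp

lemma projective_X_of_retract (h : Retract A B) [Module.Projective R B.X] :
    Module.Projective R A.X :=
  .of_split h.i.f h.r.f (retract_f h)

lemma projective_coker_of_retract (h : Retract A B)
    [Module.Projective S (B.Y ⧸ LinearMap.range B.phi)] :
    Module.Projective S (A.Y ⧸ LinearMap.range A.phi) :=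
  .of_split (Submodule.mapQ _ _ h.i.g (range_le_comap h.i))
    (Submodule.mapQ _ _ h.r.g (range_le_comap h.r)) (by
      ext y
      exact congrArg Submodule.Quotient.mk (LinearMap.congr_fun (retract_g h) y))

lemma projective_of_phi_eq_inl {C : Type} [AddCommGroup C] [Module S C]
    [Module.Projective R A.X] [Module.Projective S C] (e : A.Y ≃ₗ[S] (M ⊗[R] A.X) × C)
    (he : A.phi = e.symm.toLinearMap ∘ₗ LinearMap.inl S _ _) : Projective A where
  factors {E B} f p _ := by
    obtain ⟨fX, hfX⟩ := Module.projective_lifting_property p.f f.f (surjective_f_of_epi p)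
    obtain ⟨fC, hfC⟩ := Module.projective_lifting_property p.g
      (f.g ∘ₗ e.symm.toLinearMap ∘ₗ LinearMap.inr S _ _) (surjective_g_of_epi p)
    let gY : (M ⊗[R] A.X) × C →ₗ[S] E.Y := (E.phi ∘ₗ lT fX).coprod fC
    have hgY : p.g ∘ₗ gY = f.g ∘ₗ e.symm.toLinearMap := by
      refine LinearMap.prod_ext ?_ ?_
      · calc (p.g ∘ₗ gY) ∘ₗ LinearMap.inl S _ _ = (p.g ∘ₗ E.phi) ∘ₗ lT fX := by
              rw [LinearMap.comp_assoc, LinearMap.coprod_inl, LinearMap.comp_assoc]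
          _ = B.phi ∘ₗ lT (p.f ∘ₗ fX) := by
              rw [p.comm, lT_comp, LinearMap.comp_assoc]
          _ = (f.g ∘ₗ e.symm.toLinearMap) ∘ₗ LinearMap.inl S _ _ := by
              rw [hfX, ← f.comm, he, LinearMap.comp_assoc]
      · rw [LinearMap.comp_assoc, LinearMap.coprod_inr, hfC, LinearMap.comp_assoc]
    refine ⟨⟨fX, gY ∘ₗ e.toLinearMap, ?_⟩, TriModHom.ext hfX ?_⟩
    · rw [he, LinearMap.comp_assoc, ← LinearMap.comp_assoc _ _ e.toLinearMap,
        e.comp_symm, LinearMap.id_comp, LinearMap.coprod_inl]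
    · show p.g ∘ₗ gY ∘ₗ e.toLinearMap = f.g
      rw [← LinearMap.comp_assoc, hgY, LinearMap.comp_assoc, e.symm_comp, LinearMap.comp_id]

variable (A) in
noncomputable def freeCover : TriMod R S M :=
  ⟨A.X →₀ R, (M ⊗[R] (A.X →₀ R)) × (A.Y →₀ S), LinearMap.inl S _ _⟩

variable (A) in
noncomputable def freeCoverπ : freeCover A ⟶ A :=
  ⟨Finsupp.linearCombination R id,
    (A.phi ∘ₗ lT (Finsupp.linearCombination R id)).coprod (Finsupp.linearCombination S id),
    LinearMap.coprod_inl _ _⟩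

instance : Epi (freeCoverπ A) :=
  epi_of_surjective _ (Finsupp.linearCombination_id_surjective R A.X) fun y =>
    let ⟨w, hw⟩ := Finsupp.linearCombination_id_surjective S A.Y y
    ⟨(0, w), show A.phi (lT _ 0) + Finsupp.linearCombination S id w = y by simp [hw]⟩

lemma injective_phi_freeCover : Function.Injective (freeCover A).phi :=
  LinearMap.inl_injective (R := S) (M := M ⊗[R] (A.X →₀ R)) (M₂ := A.Y →₀ S)

instance : Module.Projective R (freeCover A).X :=
  inferInstanceAs (Module.Projective R (A.X →₀ R))

instance : Module.Projective S ((freeCover A).Y ⧸ LinearMap.range (freeCover A).phi) :=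
  .of_equiv' ((Submodule.quotEquivOfEq _ _ (LinearMap.range_inl S _ _)).trans
    (LinearMap.quotKerEquivOfSurjective _ LinearMap.snd_surjective)).symm

end TriMod

/-- A Γ-module `(X, Y)_φ` is projective iff `φ` is a monomorphism, `X` is a projective
`R`-module and `Coker φ` is a projective `S`-module. -/
theorem projective_triMod_iff (A : TriMod R S M) :
    Projective A ↔
      Function.Injective A.phi ∧ Module.Projective R A.X ∧
        Module.Projective S (A.Y ⧸ LinearMap.range A.phi) := by
  constructor
  · intro hA
    obtain ⟨i, hi⟩ := Projective.factors (𝟙 A) (TriMod.freeCoverπ A)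
    let h : Retract A (TriMod.freeCover A) := ⟨i, TriMod.freeCoverπ A, hi⟩
    exact ⟨TriMod.injective_phi_of_retract h TriMod.injective_phi_freeCover,
      TriMod.projective_X_of_retract h, TriMod.projective_coker_of_retract h⟩
  · rintro ⟨hφ, hX, hC⟩
    obtain ⟨s, hs⟩ := Module.projective_lifting_property (LinearMap.range A.phi).mkQ
      LinearMap.id (Submodule.mkQ_surjective _)
    let e := (LinearMap.exact_map_mkQ_range A.phi).splitSurjectiveEquiv hφ ⟨s, hs⟩
    exact TriMod.projective_of_phi_eq_inl e.1 e.2.1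

end Statement
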